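/- For every a > 0, R > 1/2, and φ ∈ H¹(0,R), one has κ(a,R)·∫₀^{1/2} φ² dt ≤ ∫₀^R (φ')² dt + a²·∫_{1/2}^R φ² dt, where κ(a,R) is the smallest positive root of √κ · tan(√κ/2) = a·tanh(a(R − 1/2)). -/

import Mathlib

/-! Riccati substitution: if `w' = w² + m` on `[x, y]`, then expanding `0 ≤ ∫ (φ' + w φ)²` and
integrating `(w φ²)' = (w² + m) φ² + 2 w φ φ'` gives
`w x φ(x)² - w y φ(y)² + m ∫ φ² ≤ ∫ φ'²`.
On `[0, 1/2]` take `w t = √κ tan (√κ t)`, `m = κ`; it is defined there because minimality of `κ`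
forces `√κ < π`. On `[1/2, R]` take `w t = a tanh (a (R - t))`, `m = -a²`. Both vanish at the
outer endpoints and, by the root equation, agree at `1/2`, so the boundary terms cancel when the
two inequalities are added. -/

open MeasureTheory Set Real
open scoped Interval

theorem Real.hasDerivAt_tanh (x : ℝ) : HasDerivAt tanh (1 - tanh x ^ 2) x := by
  have h := (hasDerivAt_sinh x).div (hasDerivAt_cosh x) (cosh_pos x).ne'
  rw [show sinh / cosh = tanh from funext fun y => (tanh_eq_sinh_div_cosh y).symm] at h
  refine h.congr_deriv ?_
  rw [tanh_eq_sinh_div_cosh]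
  field_simp

theorem Real.tanh_pos {x : ℝ} (hx : 0 < x) : 0 < tanh x := by
  rw [tanh_eq_sinh_div_cosh]
  exact div_pos (sinh_pos_iff.mpr hx) (cosh_pos x)

theorem hasDerivAt_mul_tan_mul {s t : ℝ} (h : cos (s * t) ≠ 0) :
    HasDerivAt (fun t => s * tan (s * t)) ((s * tan (s * t)) ^ 2 + s ^ 2) t := by
  refine (((hasDerivAt_tan h).comp t ((hasDerivAt_id t).const_mul s)).const_mul s).congr_deriv ?_
  rw [tan_eq_sin_div_cos]
  field_simp
  nlinarith [sin_sq_add_cos_sq (s * t)]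

theorem hasDerivAt_mul_tanh_mul_sub (a R t : ℝ) :
    HasDerivAt (fun t => a * tanh (a * (R - t))) ((a * tanh (a * (R - t))) ^ 2 + -a ^ 2) t := by
  refine (((hasDerivAt_tanh _).comp t
    (((hasDerivAt_id t).const_sub R).const_mul a)).const_mul a).congr_deriv ?_
  simp only [id]
  ring

theorem aestronglyMeasurable_of_hasDerivAt {φ φ' : ℝ → ℝ} {s : Set ℝ} (hs : MeasurableSet s)
    (hφ : ∀ t ∈ s, HasDerivAt φ (φ' t) t) : AEStronglyMeasurable φ' (volume.restrict s) :=
  (measurable_deriv φ).aestronglyMeasurable.congr <|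
    (ae_restrict_iff' hs).2 (ae_of_all _ fun t ht => (hφ t ht).deriv)

theorem IntervalIntegrable.of_sq {f : ℝ → ℝ} {x y : ℝ}
    (hf : AEStronglyMeasurable f (volume.restrict (Ι x y)))
    (hf2 : IntervalIntegrable (fun t => f t ^ 2) volume x y) :
    IntervalIntegrable f volume x y := by
  have : IsFiniteMeasure (volume.restrict (Ι x y)) :=
    isFiniteMeasure_restrict.2 measure_Ioc_lt_top.ne
  rw [intervalIntegrable_iff] at hf2 ⊢
  exact ((memLp_two_iff_integrable_sq hf).2 hf2).integrable one_le_two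

theorem le_integral_deriv_sq_of_riccati {w φ φ' : ℝ → ℝ} {m x y : ℝ} (hxy : x ≤ y)
    (hw : ∀ t ∈ Icc x y, HasDerivAt w (w t ^ 2 + m) t)
    (hφ : ∀ t ∈ Icc x y, HasDerivAt φ (φ' t) t)
    (hφ' : IntervalIntegrable (fun t => φ' t ^ 2) volume x y) :
    w x * φ x ^ 2 - w y * φ y ^ 2 + m * ∫ t in x..y, φ t ^ 2 ≤ ∫ t in x..y, φ' t ^ 2 := by
  rw [← uIcc_of_le hxy] at hw hφ
  have hwc : ContinuousOn w [[x, y]] := fun t ht => (hw t ht).continuousAt.continuousWithinAt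
  have hφc : ContinuousOn φ [[x, y]] := fun t ht => (hφ t ht).continuousAt.continuousWithinAt
  have hφ'int : IntervalIntegrable φ' volume x y :=
    .of_sq (aestronglyMeasurable_of_hasDerivAt measurableSet_uIoc
      fun t ht => hφ t (uIoc_subset_uIcc ht)) hφ'
  have hφ2int : IntervalIntegrable (fun t => φ t ^ 2) volume x y := (hφc.pow 2).intervalIntegrable
  set D : ℝ → ℝ := fun t => (w t ^ 2 + m) * φ t ^ 2 + φ' t * (2 * w t * φ t)
  have hD : IntervalIntegrable D volume x y :=
    ((hwc.pow 2).add continuousOn_const |>.mul (hφc.pow 2)).intervalIntegrable.add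
      (hφ'int.mul_continuousOn ((continuousOn_const.mul hwc).mul hφc))
  have hFTC : ∫ t in x..y, D t = w y * φ y ^ 2 - w x * φ x ^ 2 :=
    intervalIntegral.integral_eq_sub_of_hasDerivAt (fun t ht =>
      ((hw t ht).mul ((hφ t ht).pow 2)).congr_deriv <| by
        simp only [D, Pi.pow_apply]; push_cast; ring) hD
  have hsq : ∫ t in x..y, (φ' t + w t * φ t) ^ 2
      = (∫ t in x..y, φ' t ^ 2) + (∫ t in x..y, D t) - m * ∫ t in x..y, φ t ^ 2 := by
    rw [← intervalIntegral.integral_const_mul, ← intervalIntegral.integral_add hφ' hD,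
      ← intervalIntegral.integral_sub (hφ'.add hD) (hφ2int.const_mul m)]
    exact intervalIntegral.integral_congr fun t _ => by simp only [D]; ring
  have hnonneg : 0 ≤ ∫ t in x..y, (φ' t + w t * φ t) ^ 2 :=
    intervalIntegral.integral_nonneg hxy fun t _ => sq_nonneg _
  linarith

theorem exists_mem_Ioo_zero_pi_mul_tan_half_eq {c : ℝ} (hc : 0 < c) :
    ∃ s ∈ Ioo 0 π, s * tan (s / 2) = c := by
  set x := arctan (c + 1)
  have hx : π / 4 < x := by rw [← arctan_one]; exact arctan_strictMono (by linarith)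
  have hxπ : x < π / 2 := arctan_lt_pi_div_two _
  have hcont : ContinuousOn (fun z => z * tan (z / 2)) (Icc 0 (2 * x)) := fun z hz =>
    have hcos : cos (z / 2) ≠ 0 :=
      (cos_pos_of_mem_Ioo ⟨by linarith [hz.1], by linarith [hz.2]⟩).ne'
    (continuousAt_id.mul ((continuousAt_tan.2 hcos).comp (f := fun y => y / 2)
      (continuousAt_id.div_const 2))).continuousWithinAt
  -- at `2 x` the function equals `2 x (c + 1) > c`, because `2 x > π / 2 > 1`
  have hmem : c ∈ Icc (0 * tan (0 / 2)) (2 * x * tan (2 * x / 2)) := by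
    refine ⟨by simpa using hc.le, ?_⟩
    rw [mul_div_cancel_left₀ _ two_ne_zero, tan_arctan]
    nlinarith [pi_gt_three]
  obtain ⟨s, ⟨hs0, hsx⟩, hs⟩ := intermediate_value_Icc (by linarith [pi_pos]) hcont hmem
  refine ⟨s, ⟨hs0.lt_of_ne ?_, by linarith⟩, hs⟩
  rintro rfl
  simp only [zero_div, tan_zero, mul_zero] at hs
  exact hc.ne hs

theorem friedrichs_truncated_general (a R κ : ℝ) (ha : 0 < a) (hR : 1 / 2 < R)
    (hκpos : 0 < κ)
    (hκroot : Real.sqrt κ * Real.tan (Real.sqrt κ / 2) = a * Real.tanh (a * (R - 1 / 2)))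
    (hκmin : ∀ κ' : ℝ, 0 < κ' →
      Real.sqrt κ' * Real.tan (Real.sqrt κ' / 2) = a * Real.tanh (a * (R - 1 / 2)) → κ ≤ κ')
    (φ φ' : ℝ → ℝ)
    (hφ : ∀ t, HasDerivAt φ (φ' t) t)
    (hφ'L2 : IntegrableOn (fun t => (φ' t) ^ 2) (Ioo (0 : ℝ) R)) :
    κ * ∫ t in Ioo (0 : ℝ) (1 / 2), (φ t) ^ 2 ≤
      (∫ t in Ioo (0 : ℝ) R, (φ' t) ^ 2) + a ^ 2 * ∫ t in Ioo (1 / 2 : ℝ) R, (φ t) ^ 2 := by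
  obtain ⟨s, ⟨hs0, hsπ⟩, hs⟩ :=
    exists_mem_Ioo_zero_pi_mul_tan_half_eq (mul_pos ha (tanh_pos (mul_pos ha (sub_pos.2 hR))))
  have hκπ : √κ < π := by
    have := hκmin (s ^ 2) (by positivity) (by rwa [sqrt_sq hs0.le])
    exact ((sqrt_le_sqrt this).trans_eq (sqrt_sq hs0.le)).trans_lt hsπ
  have hcos : ∀ t ∈ Icc (0 : ℝ) (1 / 2), cos (√κ * t) ≠ 0 := fun t ht =>
    (cos_pos_of_mem_Ioo ⟨by nlinarith [ht.1, pi_pos, sqrt_nonneg κ],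
      by nlinarith [ht.1, ht.2, sqrt_nonneg κ]⟩).ne'
  have hφ'int {x y : ℝ} (hx : 0 ≤ x) (hy : y ≤ R) (hxy : x ≤ y) :
      IntervalIntegrable (fun t => φ' t ^ 2) volume x y :=
    (intervalIntegrable_iff_integrableOn_Ioo_of_le hxy).2 (hφ'L2.mono_set (Ioo_subset_Ioo hx hy))
  have hleft := le_integral_deriv_sq_of_riccati (w := fun t => √κ * tan (√κ * t)) (m := κ)
    (by norm_num) (fun t ht => by
      simpa only [sq_sqrt hκpos.le] using hasDerivAt_mul_tan_mul (hcos t ht))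
    (fun t _ => hφ t) (hφ'int le_rfl hR.le (by norm_num))
  have hright := le_integral_deriv_sq_of_riccati (w := fun t => a * tanh (a * (R - t)))
    (m := -a ^ 2) hR.le (fun t _ => hasDerivAt_mul_tanh_mul_sub a R t) (fun t _ => hφ t)
    (hφ'int (by norm_num) le_rfl hR.le)
  have hIoo {f : ℝ → ℝ} {x y : ℝ} (hxy : x ≤ y) : ∫ t in Ioo x y, f t = ∫ t in x..y, f t := by
    rw [intervalIntegral.integral_of_le hxy, integral_Ioc_eq_integral_Ioo]
  rw [hIoo (by norm_num), hIoo hR.le, hIoo (by linarith),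
    ← intervalIntegral.integral_add_adjacent_intervals (hφ'int le_rfl hR.le (by norm_num))
      (hφ'int (by norm_num) le_rfl hR.le)]
  simp only [mul_zero, tan_zero, sub_self, tanh_zero, zero_mul, ← div_eq_mul_one_div, hκroot]
    at hleft hright
  linarith

/-- Friedrichs inequality on the truncated interval `(0,R)`: for `a > 0`, `R > 1/2` and
`κ(a,R)` the smallest positive root of `√κ · tan(√κ/2) = a·tanh(a(R − 1/2))`, every
`φ ∈ H¹(0,R)` satisfies `κ(a,R) ∫₀^{1/2} φ² ≤ ∫₀^R (φ')² + a² ∫_{1/2}^R φ²`. -/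
theorem friedrichs_truncated (a R κ : ℝ) (ha : 0 < a) (hR : 1 / 2 < R)
    (hκpos : 0 < κ)
    (hκroot : Real.sqrt κ * Real.tan (Real.sqrt κ / 2) = a * Real.tanh (a * (R - 1 / 2)))
    (hκmin : ∀ κ' : ℝ, 0 < κ' →
      Real.sqrt κ' * Real.tan (Real.sqrt κ' / 2) = a * Real.tanh (a * (R - 1 / 2)) → κ ≤ κ')
    (φ φ' : ℝ → ℝ)
    (hφ : ∀ t, HasDerivAt φ (φ' t) t)
    (hφL2 : IntegrableOn (fun t => (φ t) ^ 2) (Ioo (0 : ℝ) R))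
    (hφ'L2 : IntegrableOn (fun t => (φ' t) ^ 2) (Ioo (0 : ℝ) R)) :
    κ * ∫ t in Ioo (0 : ℝ) (1 / 2), (φ t) ^ 2 ≤
      (∫ t in Ioo (0 : ℝ) R, (φ' t) ^ 2) + a ^ 2 * ∫ t in Ioo (1 / 2 : ℝ) R, (φ t) ^ 2 :=
  friedrichs_truncated_general a R κ ha hR hκpos hκroot hκmin φ φ' hφ hφ'L2
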